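/- arXiv:1402.5361 — 2 statements merged into one kernel-verified Lean document; each statement's English description precedes it below -/
import Mathlib

section
/- For every integer d ≥ 12, the integer d(d-11)/2 + 20, which equals g_{d-4}(d) - 1 where g_s(d) = C(s-1,2) + C(d-s,2), is a gap in R_d. -/
/-- The Macaulay bound `a^⟨t⟩`: if `a = C(k_t,t) + C(k_{t-1},t-1) + ⋯ + C(k_j,j)` is the
binomial expansion of `a` in base `t`, then `a^⟨t⟩ = C(k_t+1,t+1) + ⋯ + C(k_j+1,j+1)`.
Computed greedily; `mac t a = a^⟨t⟩` for `t ≥ 1`. -/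
def mac : ℕ → ℕ → ℕ
  | 0, _ => 0
  | t+1, a =>
    if a = 0 then 0
    else
      Nat.choose (Nat.findGreatest (fun n => Nat.choose n (t+1) ≤ a) (a + t + 1) + 1) (t+2) +
        mac t (a - Nat.choose (Nat.findGreatest (fun n => Nat.choose n (t+1) ≤ a) (a + t + 1)) (t+1))

/-- `h : ℕ → ℕ` is a finite O-sequence of length `s`: `h 0 = 1`, the entries `h 0, …, h (s-1)`
are positive, entries from index `s` on are zero, and `h (t+1) ≤ (h t)^⟨t⟩` for all `t ≥ 1`. -/
def IsOSeq (h : ℕ → ℕ) (s : ℕ) : Prop :=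
  h 0 = 1 ∧ (∀ i, 0 < h i ↔ i < s) ∧ ∀ t, 1 ≤ t → h (t + 1) ≤ mac t (h t)

/-- The multiplicity `e(h) = h_0 + ⋯ + h_{s-1}` of a finite O-sequence of length `s`. -/
def mult (h : ℕ → ℕ) (s : ℕ) : ℕ := ∑ i ∈ Finset.range s, h i

/-- The genus `g(h) = Σ_{j=2}^{s-1} (j-1)·h_j` of a finite O-sequence of length `s`. -/
def genus (h : ℕ → ℕ) (s : ℕ) : ℕ := ∑ j ∈ Finset.range s, (j - 1) * h j

/-- The sequence obtained from `h` by increasing the `i`-th entry by `1`, i.e. `h + e_i`. -/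
def addE (h : ℕ → ℕ) (i : ℕ) : ℕ → ℕ := fun j => if j = i then h j + 1 else h j

/-- The sequence obtained from `h` by decreasing the `i`-th entry by `1`, i.e. `h - e_i`. -/
def subE (h : ℕ → ℕ) (i : ℕ) : ℕ → ℕ := fun j => if j = i then h j - 1 else h j

/-- The total order on finite O-sequences of the same length: `oLT h k` iff `h_ℓ < k_ℓ`
where `ℓ = max{ j : h_j ≠ k_j }`. -/
def oLT (h k : ℕ → ℕ) : Prop := ∃ ℓ, h ℓ < k ℓ ∧ ∀ j, ℓ < j → h j = k j

/-- The set of genera of finite O-sequences of multiplicity `d` and length `s`. -/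
def genusSet (d s : ℕ) : Set ℕ := {g | ∃ h, IsOSeq h s ∧ mult h s = d ∧ genus h s = g}

/-- `G_d`: the set of genera of finite O-sequences of multiplicity `d` (of any length). -/
def GSet (d : ℕ) : Set ℕ := {g | ∃ h s, IsOSeq h s ∧ mult h s = d ∧ genus h s = g}

/-- `g` is a gap in `R_d = [0, C(d-1,2)]`: it lies in the range but is not the genus of any
finite O-sequence of multiplicity `d`. -/
def IsGap (d g : ℕ) : Prop :=
  g ≤ Nat.choose (d - 1) 2 ∧ ∀ h s, IsOSeq h s → mult h s = d → genus h s ≠ g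

/-- The O-sequence `(1, d-s+1, 1^{s-2})`, minimal in `𝒢_d^s`. -/
def minSeq (d s : ℕ) : ℕ → ℕ :=
  fun j => if j = 0 then 1 else if j = 1 then d - s + 1 else if j < s then 1 else 0

/-- The O-sequence `(1, 2^{d-s}, 1^{2s-d-1})`, maximal in `𝒢_d^s`. -/
def maxSeq (d s : ℕ) : ℕ → ℕ :=
  fun j => if j = 0 then 1 else if j ≤ d - s then 2 else if j < s then 1 else 0

/-- The O-sequence `(1, d-1)`. -/
def twoSeq (d : ℕ) : ℕ → ℕ := fun j => if j = 0 then 1 else if j = 1 then d - 1 else 0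

/-- The operation `h ↦ h - e_{s-1} + e_1` on a sequence of length `s`. -/
def downUp (h : ℕ → ℕ) (s : ℕ) : ℕ → ℕ :=
  fun j => if j = s - 1 then h j - 1 else if j = 1 then h j + 1 else h j

/-- The largest index `1 ≤ j ≤ s-1` with `h j > 1` (and `0` if there is none). -/
def topIdx (h : ℕ → ℕ) (s : ℕ) : ℕ := Nat.findGreatest (fun j => 1 < h j) (s - 1)

/-- The operation `h ↦ h - e_i + e_1` where `i = topIdx h s`. -/
def shiftDown (h : ℕ → ℕ) (s : ℕ) : ℕ → ℕ :=
  fun j => if j = topIdx h s then h j - 1 else if j = 1 then h j + 1 else h j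

/-- Auxiliary list `[m_n, m_{n-1}, …, m_1]` for the recursively defined sequence `(m_d)`. -/
def mListAux : ℕ → List ℕ
  | 0 => []
  | n+1 =>
    let prev := mListAux n
    let newVal :=
      if n = 0 then 0
      else
        (List.range' 2 (n - 1)).foldl
          (fun M k =>
            if Nat.choose k 2 - 1 ≤ M then max M (prev.getD (k - 1) 0 + Nat.choose k 2) else M)
          (prev.getD 0 0)
    newVal :: prev

/-- The sequence `(m_d)_{d ≥ 1}`: `m_1 = 0` and, for `d ≥ 2`, `m_d` is obtained from
`M := m_{d-1}` by running over `k = 2, …, d-1` and replacing `M` by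
`max M (m_{d-k} + C(k,2))` whenever `C(k,2) - 1 ≤ M`. -/
def mSeq (d : ℕ) : ℕ := (mListAux d).getD 0 0

/-!
Write `h_j = 1 + x_j`. Macaulay's bound gives `a^⟨t⟩ = a` for `a ≤ t`, so once an entry drops
to `1` the sequence stays at `1`; hence `x_j ≥ 1` exactly for `1 ≤ j ≤ m := topIdx h s`, and with
`E = ∑ x_j` we get `d = s + E` and `g(h) = C(s-1,2) + ∑ (j-1) x_j`.
If `s ≥ d - 3`, already `C(s-1,2) > C(d-5,2) + 5`. If `s = d - 4`, then `E = 4` and the weighted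
sum would be `5`, which forces `h = (1,2,2,3,…)`, violating Macaulay's bound `h_3 ≤ 2^⟨2⟩ = 2`.
If `s ≤ d - 5`, loading all the excess on degree `m ≤ min(s-1, E)` bounds the genus by
`C(d-5,2) + 4`.
-/

lemma mac_of_le {t a : ℕ} (hat : a ≤ t) : mac t a = a := by
  induction t generalizing a with
  | zero => rw [Nat.le_zero.mp hat]; rfl
  | succ t ih =>
    rcases Nat.eq_zero_or_pos a with rfl | ha
    · simp [mac]
    have hfg : Nat.findGreatest (fun n => Nat.choose n (t + 1) ≤ a) (a + t + 1) = t + 1 := by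
      refine Nat.findGreatest_eq_iff.mpr ⟨by omega, fun _ => by rw [Nat.choose_self]; exact ha,
        fun n hn _ hle => ?_⟩
      have := Nat.choose_le_choose (t + 1) (show t + 2 ≤ n by omega)
      rw [Nat.choose_succ_self_right] at this
      omega
    rw [mac, if_neg ha.ne', hfg, Nat.choose_self, Nat.choose_self, ih (by omega)]
    omega

def excess (h : ℕ → ℕ) (j : ℕ) : ℕ := h (j + 1) - 1

namespace IsOSeq

variable {h : ℕ → ℕ} {s : ℕ}

lemma pos (hO : IsOSeq h s) : 0 < s := (hO.2.1 0).mp (by simp [hO.1])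

lemma succ_le_of_le_self (hO : IsOSeq h s) {t : ℕ} (ht : 1 ≤ t) (hle : h t ≤ t) :
    h (t + 1) ≤ h t :=
  (hO.2.2 t ht).trans (mac_of_le hle).le

lemma le_of_le_self (hO : IsOSeq h s) {t j : ℕ} (ht : 1 ≤ t) (hle : h t ≤ t) (htj : t ≤ j) :
    h j ≤ h t := by
  induction j, htj using Nat.le_induction with
  | base => exact le_rfl
  | succ j htj ih => exact (hO.succ_le_of_le_self (ht.trans htj) (by omega)).trans ih

lemma eq_zero_of_le (hO : IsOSeq h s) {j : ℕ} (hj : s ≤ j) : h j = 0 := by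
  have := hO.2.1 j; omega

lemma topIdx_lt (hO : IsOSeq h s) : topIdx h s < s :=
  (Nat.findGreatest_le _).trans_lt (by have := hO.pos; omega)

lemma le_one_of_topIdx_lt (hO : IsOSeq h s) {j : ℕ} (hj : topIdx h s < j) : h j ≤ 1 := by
  by_contra! hgt
  rcases le_or_gt j (s - 1) with hjs | hjs
  · exact Nat.findGreatest_is_greatest hj hjs hgt
  · have := hO.eq_zero_of_le (j := j) (by omega); omega

lemma one_lt_of_le_topIdx (hO : IsOSeq h s) {j : ℕ} (hj : 1 ≤ j) (hjm : j ≤ topIdx h s) :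
    1 < h j := by
  have htop : 1 < h (topIdx h s) := by
    have hne : topIdx h s ≠ 0 := by omega
    unfold topIdx at hne ⊢
    exact (Nat.findGreatest_eq_iff.mp rfl).2.1 hne
  by_contra! hle
  have := hO.le_of_le_self hj (by omega) hjm
  omega

lemma one_le_excess (hO : IsOSeq h s) {j : ℕ} (hj : j < topIdx h s) : 1 ≤ excess h j := by
  have := hO.one_lt_of_le_topIdx (j := j + 1) (by omega) hj
  unfold excess; omega

lemma excess_two_le_one (hO : IsOSeq h s) (h1 : excess h 1 ≤ 1) : excess h 2 ≤ 1 := by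
  simp only [excess, Nat.reduceAdd] at h1 ⊢
  have := hO.le_of_le_self (t := 2) (j := 3) (by norm_num) (by omega) (by norm_num)
  omega

lemma sum_range_mul_pred_eq (hO : IsOSeq h s) (w : ℕ → ℕ) :
    ∑ j ∈ Finset.range s, w j * (h j - 1) =
      ∑ j ∈ Finset.range (topIdx h s), w (j + 1) * excess h j := by
  have hsub : Finset.range (topIdx h s + 1) ⊆ Finset.range s :=
    Finset.range_subset_range.mpr hO.topIdx_lt
  rw [← Finset.sum_subset hsub fun j _ hj => ?_, Finset.sum_range_succ', hO.1]
  · simp [excess]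
  · have := hO.le_one_of_topIdx_lt (j := j) (by simpa using hj)
    simp [Nat.sub_eq_zero_of_le this]

lemma sum_range_eq_add (hO : IsOSeq h s) (w : ℕ → ℕ) :
    ∑ j ∈ Finset.range s, w j * h j =
      ∑ j ∈ Finset.range s, w j + ∑ j ∈ Finset.range s, w j * (h j - 1) := by
  rw [← Finset.sum_add_distrib]
  refine Finset.sum_congr rfl fun j hj => ?_
  have := (hO.2.1 j).mpr (Finset.mem_range.mp hj)
  conv_lhs => rw [← Nat.add_sub_cancel' this]
  ring

lemma mult_eq (hO : IsOSeq h s) :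
    mult h s = s + ∑ j ∈ Finset.range (topIdx h s), excess h j := by
  have := hO.sum_range_eq_add 1
  rw [hO.sum_range_mul_pred_eq 1] at this
  simpa [mult] using this

lemma genus_eq (hO : IsOSeq h s) :
    genus h s = (s - 1).choose 2 + ∑ j ∈ Finset.range (topIdx h s), j * excess h j := by
  have hpred : ∑ j ∈ Finset.range s, (j - 1) = (s - 1).choose 2 := by
    obtain ⟨n, rfl⟩ : ∃ n, s = n + 1 := ⟨s - 1, by have := hO.pos; omega⟩
    simp [Finset.sum_range_succ', Finset.sum_range_id, Nat.choose_two_right]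
  rw [genus, hO.sum_range_eq_add, hO.sum_range_mul_pred_eq, hpred]
  simp

end IsOSeq

lemma two_mul_sum_range_mul_add_le {m : ℕ} {x : ℕ → ℕ} (hx : ∀ j < m, 1 ≤ x j) :
    2 * ∑ j ∈ Finset.range m, j * x j + m * (m - 1) ≤
      2 * (m - 1) * ∑ j ∈ Finset.range m, x j := by
  have hterm : ∀ j ∈ Finset.range m, j * x j + (m - 1) ≤ j + (m - 1) * x j := by
    intro j hj
    have hjm := Finset.mem_range.mp hj
    obtain ⟨r, hr⟩ : ∃ r, m - 1 = j + r := ⟨m - 1 - j, by omega⟩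
    have := hx j hjm
    rw [hr]
    nlinarith
  have hsum := Finset.sum_le_sum hterm
  rw [Finset.sum_add_distrib, Finset.sum_add_distrib, Finset.sum_const, Finset.card_range,
    smul_eq_mul, ← Finset.mul_sum] at hsum
  have := Finset.sum_range_id_mul_two m
  linarith

-- The bound `(m-1)(2E-m)` on `2T` grows with `m ≤ E`; in the worst case `m = s - 1 = d/2` the
-- inequality reduces to `(d-6)(d-12) ≥ 0`.
lemma choose_pred_add_le {d s m E T : ℕ} (hd : 12 ≤ d) (hsE : s + E = d) (hE : 5 ≤ E)
    (hm : 1 ≤ m) (hms : m < s) (hmE : m ≤ E) (hT : 2 * T + m * (m - 1) ≤ 2 * (m - 1) * E) :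
    (s - 1).choose 2 + T ≤ (d - 5).choose 2 + 4 := by
  rw [← @Nat.cast_le ℚ]
  push_cast [Nat.cast_choose_two, Nat.cast_sub hm, Nat.cast_sub (show 1 ≤ s by omega),
    Nat.cast_sub (show 5 ≤ d by omega)]
  have hT' : 2 * (T : ℚ) + m * (m - 1) ≤ 2 * (m - 1) * E := by exact_mod_cast hT
  have hsE' : (s : ℚ) + E = d := by exact_mod_cast hsE
  have hd' : (12 : ℚ) ≤ d := by exact_mod_cast hd
  have hE' : (5 : ℚ) ≤ E := by exact_mod_cast hE
  have hms' : (m : ℚ) + 1 ≤ s := by exact_mod_cast hms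
  have hmE' : (m : ℚ) ≤ E := by exact_mod_cast hmE
  have hm' : (1 : ℚ) ≤ m := by exact_mod_cast hm
  nlinarith [mul_nonneg (sub_nonneg.mpr hms') (sub_nonneg.mpr hE'), sq_nonneg ((E : ℚ) - 5),
    sq_nonneg ((m : ℚ) - 5)]

lemma le_sum_range_of_one_le {m : ℕ} {x : ℕ → ℕ} (hx : ∀ j < m, 1 ≤ x j) :
    m ≤ ∑ j ∈ Finset.range m, x j := by
  simpa using Finset.card_nsmul_le_sum _ x 1 fun j hj => hx j (Finset.mem_range.mp hj)

-- `x = (1,1,2)` is the only pattern of total `4` and weight `5`.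
lemma sum_range_mul_ne_five {m : ℕ} {x : ℕ → ℕ} (hx : ∀ j < m, 1 ≤ x j)
    (hx12 : x 1 ≤ 1 → x 2 ≤ 1) (hE : ∑ j ∈ Finset.range m, x j = 4) :
    ∑ j ∈ Finset.range m, j * x j ≠ 5 := by
  have hm : m ≤ 4 := hE ▸ le_sum_range_of_one_le hx
  have := hx 0; have := hx 1; have := hx 2; have := hx 3
  interval_cases m <;> simp only [Finset.sum_range_succ, Finset.sum_range_zero] at hE ⊢ <;> omega

lemma choose_sub_five_add_five_lt {d : ℕ} (hd : 12 ≤ d) :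
    (d - 5).choose 2 + 5 < (d - 4).choose 2 := by
  obtain ⟨n, rfl⟩ : ∃ n, d = n + 12 := ⟨d - 12, by omega⟩
  rw [show n + 12 - 4 = n + 7 + 1 by omega, Nat.choose_succ_succ', show n + 12 - 5 = n + 7 by omega,
    Nat.choose_one_right]
  simp only [Nat.reduceAdd]
  omega

lemma mul_sub_eleven_div_two_add_twenty {d : ℕ} (hd : 12 ≤ d) :
    d * (d - 11) / 2 + 20 = (d - 5).choose 2 + 5 := by
  obtain ⟨n, rfl⟩ : ∃ n, d = n + 12 := ⟨d - 12, by omega⟩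
  rw [Nat.choose_two_right, show n + 12 - 11 = n + 1 by omega,
    show n + 12 - 5 - 1 = n + 6 by omega, show n + 12 - 5 = n + 7 by omega,
    show (n + 7) * (n + 6) = (n + 12) * (n + 1) + 30 by ring]
  omega

theorem IsOSeq.genus_ne_choose_add_five {h : ℕ → ℕ} {s : ℕ} (hO : IsOSeq h s)
    (hd : 12 ≤ mult h s) : genus h s ≠ (mult h s - 5).choose 2 + 5 := by
  have hx : ∀ j < topIdx h s, 1 ≤ excess h j := fun j => hO.one_le_excess
  have hmE := le_sum_range_of_one_le hx
  have hms := hO.topIdx_lt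
  have hmult := hO.mult_eq
  rw [hO.genus_eq]
  generalize mult h s = d at *
  generalize topIdx h s = m at *
  intro hg
  rcases lt_trichotomy (∑ j ∈ Finset.range m, excess h j) 4 with hE | hE | hE
  · have := Nat.choose_le_choose 2 (show d - 4 ≤ s - 1 by omega)
    have := choose_sub_five_add_five_lt hd
    omega
  · refine sum_range_mul_ne_five hx hO.excess_two_le_one hE ?_
    rw [show s - 1 = d - 5 by omega] at hg
    omega
  · have hm : m ≠ 0 := by
      rintro rfl
      simp at hE
    have := choose_pred_add_le hd hmult.symm hE (by omega) hms hmE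
      (two_mul_sum_range_mul_add_le hx)
    omega

/-- For every `d ≥ 12`, the integer `d(d-11)/2 + 20`, which equals
`g_{d-4}(d) - 1` where `g_s(d) = C(s-1,2) + C(d-s,2)`, is a gap in `R_d`. -/
theorem stmt14 (d : ℕ) (hd : 12 ≤ d) :
    d * (d - 11) / 2 + 20 = Nat.choose (d - 5) 2 + Nat.choose 4 2 - 1 ∧
    IsGap d (d * (d - 11) / 2 + 20) := by
  rw [mul_sub_eleven_div_two_add_twenty hd]
  refine ⟨rfl, ?_, fun h s hO hmult => ?_⟩
  · exact (choose_sub_five_add_five_lt hd).le.trans (Nat.choose_le_choose 2 (by omega))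
  · subst hmult
    exact hO.genus_ne_choose_add_five hd
end

section
/- For every integer d ≥ 1 and every integer g with 0 ≤ g ≤ m_d, there exists a finite O-sequence of multiplicity d whose genus equals g; that is, {0, 1, …, m_d} ⊆ G_d, where G_d denotes the set of genera of finite O-sequences of multiplicity d. -/
/-! Adding `1` to the entries `h_1, …, h_k` of an O-sequence gives again an O-sequence, because
`a ↦ a^⟨t⟩` is strictly increasing for `t ≥ 1`; it raises the multiplicity by `k` and the genus by
`1 + 2 + ⋯ + (k - 1) = C(k,2)`. Hence `G_{d-k} + C(k,2) ⊆ G_d`, and by induction on `d` each step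
of the recursion defining `m_d` turns `[0, M] ⊆ G_d` into `[0, max M (m_{d-k} + C(k,2))] ⊆ G_d`:
the condition `C(k,2) - 1 ≤ M` says that `C(k,2) + [0, m_{d-k}]` leaves no gap above `[0, M]`.
The strict monotonicity of `a^⟨t⟩` comes from comparing greedy binomial expansions:
a remainder below `C(n,t)` has Macaulay bound below `C(n+1,t+1)`. -/

open Finset

lemma mac_zero_right (t : ℕ) : mac t 0 = 0 := by
  cases t <;> rfl

lemma lt_choose_add_succ (a t : ℕ) : a < (a + t + 1).choose (t + 1) := by
  induction a with
  | zero => simp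
  | succ a ih =>
    rw [show a + 1 + t + 1 = (a + t + 1) + 1 by omega, Nat.choose_succ_succ']
    have : 0 < (a + t + 1).choose t := Nat.choose_pos (by omega)
    omega

lemma exists_choose_le_lt_choose_succ (t a : ℕ) :
    ∃ n, n.choose (t + 1) ≤ a ∧ a < (n + 1).choose (t + 1) := by
  have hP : ∃ n, a < (n + 1).choose (t + 1) := ⟨a + t, lt_choose_add_succ a t⟩
  refine ⟨Nat.find hP, ?_, Nat.find_spec hP⟩
  rcases Nat.eq_zero_or_pos (Nat.find hP) with h | h
  · simp [h]
  · obtain ⟨m, hm⟩ : ∃ m, Nat.find hP = m + 1 := ⟨_, (Nat.succ_pred_eq_of_pos h).symm⟩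
    rw [hm]
    exact not_lt.1 (Nat.find_min hP (by omega))

-- Also valid at `a = 0`, where `mac` does not take the greedy step.
lemma mac_succ_eq {t a n : ℕ} (h₁ : n.choose (t + 1) ≤ a) (h₂ : a < (n + 1).choose (t + 1)) :
    mac (t + 1) a = (n + 1).choose (t + 2) + mac t (a - n.choose (t + 1)) := by
  rcases Nat.eq_zero_or_pos a with rfl | ha
  · have hn : n = t := by
      have := Nat.choose_eq_zero_iff.1 (Nat.le_zero.1 h₁)
      have := mt Nat.choose_eq_zero_iff.2 h₂.ne'
      omega
    subst hn
    simp [mac_zero_right]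
  · have hbound : n ≤ a + t + 1 := by
      by_contra hn
      have := Nat.choose_le_choose (t + 1) (le_of_not_ge hn)
      have := lt_choose_add_succ a t
      omega
    have hgreedy : Nat.findGreatest (fun n => n.choose (t + 1) ≤ a) (a + t + 1) = n :=
      Nat.findGreatest_eq_iff.2 ⟨hbound, fun _ => h₁, fun m hnm _ hm =>
        not_le.2 h₂ ((Nat.choose_le_choose _ hnm).trans hm)⟩
    simp only [mac, ha.ne', if_false, hgreedy]

lemma mac_lt_choose_succ {t m r : ℕ} (hr : r < m.choose t) : mac t r < (m + 1).choose (t + 1) := by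
  induction t generalizing m r with
  | zero => simp [mac]
  | succ t ih =>
    obtain ⟨n, h₁, h₂⟩ := exists_choose_le_lt_choose_succ t r
    have hnm : n < m := by
      by_contra hmn
      have := Nat.choose_le_choose (t + 1) (le_of_not_gt hmn)
      omega
    have hrem : r - n.choose (t + 1) < n.choose t := by
      have := Nat.choose_succ_succ' n t
      omega
    have hmac := ih hrem
    have hpascal : (n + 2).choose (t + 2) = (n + 1).choose (t + 1) + (n + 1).choose (t + 2) :=
      Nat.choose_succ_succ' _ _
    have hmono := Nat.choose_le_choose (t + 2) (show n + 2 ≤ m + 1 by omega)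
    rw [mac_succ_eq h₁ h₂, show t + 1 + 1 = t + 2 from rfl]
    omega

-- When `a` and `a + 1` have different leading binomial coefficients, the leading term alone
-- makes `mac` jump.
lemma mac_succ_lt_mac_succ_of_remainder {t a : ℕ}
    (hrem : ∀ n, n.choose (t + 1) ≤ a → a + 1 < (n + 1).choose (t + 1) →
      mac t (a - n.choose (t + 1)) < mac t (a + 1 - n.choose (t + 1))) :
    mac (t + 1) a < mac (t + 1) (a + 1) := by
  obtain ⟨n, h₁, h₂⟩ := exists_choose_le_lt_choose_succ t a
  obtain ⟨n', h₁', h₂'⟩ := exists_choose_le_lt_choose_succ t (a + 1)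
  have hnn' : n ≤ n' := by
    by_contra hn
    have := Nat.choose_le_choose (t + 1) (show n' + 1 ≤ n by omega)
    omega
  rw [mac_succ_eq h₁ h₂, mac_succ_eq h₁' h₂']
  rcases hnn'.lt_or_eq with hlt | rfl
  · have hmac : mac t (a - n.choose (t + 1)) < (n + 1).choose (t + 1) :=
      mac_lt_choose_succ (by have := Nat.choose_succ_succ' n t; omega)
    have hpascal : (n + 2).choose (t + 2) = (n + 1).choose (t + 1) + (n + 1).choose (t + 2) :=
      Nat.choose_succ_succ' _ _
    have hmono := Nat.choose_le_choose (t + 2) (show n + 2 ≤ n' + 1 by omega)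
    omega
  · have := hrem n h₁ h₂'
    omega

lemma mac_lt_mac_succ (t a : ℕ) : mac (t + 1) a < mac (t + 1) (a + 1) := by
  induction t generalizing a with
  | zero =>
    refine mac_succ_lt_mac_succ_of_remainder fun n h₁ h₂ => ?_
    simp only [zero_add, Nat.choose_one_right] at h₁ h₂
    omega
  | succ t ih =>
    refine mac_succ_lt_mac_succ_of_remainder fun n h₁ _ => ?_
    rw [show a + 1 - n.choose (t + 1 + 1) = a - n.choose (t + 1 + 1) + 1 by omega]
    exact ih _

lemma sum_range_eq_of_eq_zero {M : Type*} [AddCommMonoid M] {f : ℕ → M} {s N : ℕ}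
    (hf : ∀ i, s ≤ i → f i = 0) (hN : s ≤ N) : ∑ i ∈ range N, f i = ∑ i ∈ range s, f i :=
  (sum_subset (range_subset_range.2 hN) fun i _ hi => hf i (by simpa using hi)).symm

lemma sum_range_ite_mem_Icc_one {M : Type*} [AddCommMonoid M] (f : ℕ → M) {k N : ℕ}
    (hkN : k < N) : ∑ j ∈ range N, (if j ∈ Icc 1 k then f j else 0) = ∑ j ∈ Icc 1 k, f j := by
  rw [sum_ite_mem, inter_eq_right.2 fun j hj => by
    simp only [mem_Icc, mem_range] at hj ⊢; omega]

lemma sum_Icc_one_sub_one (k : ℕ) : ∑ j ∈ Icc 1 k, (j - 1) = k.choose 2 := by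
  induction k with
  | zero => simp
  | succ k ih =>
    have hpascal : (k + 1).choose 2 = k + k.choose 2 := by
      rw [Nat.choose_succ_succ', Nat.choose_one_right]
    rw [sum_Icc_succ_top (by omega), ih, hpascal]
    omega

lemma IsOSeq.one_le_length {h : ℕ → ℕ} {s : ℕ} (H : IsOSeq h s) : 1 ≤ s :=
  (H.2.1 0).1 (by simp [H.1])

lemma IsOSeq.eq_zero_of_le_s17 {h : ℕ → ℕ} {s i : ℕ} (H : IsOSeq h s) (hi : s ≤ i) : h i = 0 := by
  by_contra hne
  have := (H.2.1 i).1 (Nat.pos_of_ne_zero hne)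
  omega

def bump (h : ℕ → ℕ) (k : ℕ) : ℕ → ℕ := fun j => h j + if j ∈ Icc 1 k then 1 else 0

section bump

variable {h : ℕ → ℕ} {s : ℕ}

lemma IsOSeq.bump (H : IsOSeq h s) (k : ℕ) : IsOSeq (bump h k) (max s (k + 1)) := by
  have hs := H.one_le_length
  obtain ⟨h0, hpos, hmac⟩ := H
  refine ⟨by simp [_root_.bump, h0], fun i => ?_, fun t ht => ?_⟩
  · have := hpos i
    simp only [_root_.bump, mem_Icc]
    split_ifs <;> omega
  · obtain ⟨u, rfl⟩ : ∃ u, t = u + 1 := ⟨t - 1, by omega⟩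
    have := hmac (u + 1) ht
    have := mac_lt_mac_succ u (h (u + 1))
    simp only [_root_.bump, mem_Icc]
    split_ifs <;> omega

lemma mult_bump (H : IsOSeq h s) (k : ℕ) : mult (bump h k) (max s (k + 1)) = mult h s + k := by
  simp only [mult, _root_.bump, sum_add_distrib]
  rw [sum_range_eq_of_eq_zero (fun i hi => H.eq_zero_of_le_s17 hi) (le_max_left _ _),
    sum_range_ite_mem_Icc_one _ (by omega)]
  simp

lemma genus_bump (H : IsOSeq h s) (k : ℕ) :
    genus (bump h k) (max s (k + 1)) = genus h s + k.choose 2 := by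
  simp only [genus, _root_.bump, mul_add, mul_ite, mul_one, mul_zero, sum_add_distrib]
  rw [sum_range_eq_of_eq_zero (fun i hi => by simp [H.eq_zero_of_le_s17 hi]) (le_max_left _ _),
    sum_range_ite_mem_Icc_one _ (by omega), sum_Icc_one_sub_one]

end bump

lemma add_choose_two_mem_GSet {e g : ℕ} (hg : g ∈ GSet e) (k : ℕ) :
    g + k.choose 2 ∈ GSet (e + k) := by
  obtain ⟨h, s, H, rfl, rfl⟩ := hg
  exact ⟨bump h k, max s (k + 1), H.bump k, mult_bump H k, genus_bump H k⟩

lemma GSet_subset_succ (e : ℕ) : GSet e ⊆ GSet (e + 1) :=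
  fun _ hg => add_choose_two_mem_GSet hg 1

lemma zero_mem_GSet_one : 0 ∈ GSet 1 := by
  refine ⟨fun j => if j = 0 then 1 else 0, 1, ⟨rfl, fun i => ?_, fun t _ => ?_⟩, ?_, ?_⟩
  · by_cases hi : i = 0 <;> simp [hi]
  · simp
  · simp [mult]
  · simp [genus]

lemma mListAux_getD (n i : ℕ) : (mListAux n).getD i 0 = mSeq (n - i) := by
  induction n generalizing i with
  | zero => simp [mListAux, mSeq]
  | succ n ih =>
    cases i with
    | zero => rfl
    | succ i =>
      rw [mListAux, List.getD_cons_succ, ih, Nat.add_sub_add_right]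

lemma mSeq_add_two (n : ℕ) :
    mSeq (n + 2) = (List.range' 2 n).foldl
      (fun M k => if k.choose 2 - 1 ≤ M then max M (mSeq (n + 2 - k) + k.choose 2) else M)
      (mSeq (n + 1)) := by
  rw [mSeq, mListAux, List.getD_cons_zero, if_neg (by omega), mListAux_getD,
    Nat.add_sub_cancel]
  refine List.foldl_ext _ _ _ fun M k hk => ?_
  rw [List.mem_range'_1] at hk
  rw [mListAux_getD, show n + 1 - (k - 1) = n + 2 - k by omega]

lemma List.foldl_induction_mem {α β : Type*} {P : β → Prop} {f : β → α → β} :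
    ∀ (L : List α) {b : β}, P b → (∀ a ∈ L, ∀ b, P b → P (f b a)) → P (L.foldl f b)
  | [], _, hb, _ => hb
  | a :: L, _, hb, hf =>
    foldl_induction_mem L (hf a List.mem_cons_self _ hb) fun a' ha' =>
      hf a' (List.mem_cons_of_mem _ ha')

lemma Iic_max_subset_GSet {d k M m : ℕ} (hkd : k ≤ d) (hM : Set.Iic M ⊆ GSet d)
    (hm : Set.Iic m ⊆ GSet (d - k)) (hkM : k.choose 2 - 1 ≤ M) :
    Set.Iic (max M (m + k.choose 2)) ⊆ GSet d := by
  intro g hg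
  rcases le_or_gt g M with hgM | hgM
  · exact hM hgM
  · have hgm : g - k.choose 2 ∈ GSet (d - k) := hm (by simp only [Set.mem_Iic, le_max_iff] at hg ⊢; omega)
    have := add_choose_two_mem_GSet hgm k
    rwa [Nat.sub_add_cancel hkd, Nat.sub_add_cancel (by omega)] at this

/-- **Continuity.** For every `d ≥ 1` and every `0 ≤ g ≤ m_d`, there exists a
finite O-sequence of multiplicity `d` whose genus equals `g`; i.e. `{0, …, m_d} ⊆ G_d`. -/
theorem stmt17 (d : ℕ) (hd : 1 ≤ d) : ∀ g : ℕ, g ≤ mSeq d → g ∈ GSet d := by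
  induction d using Nat.strong_induction_on with
  | _ d IH =>
  change Set.Iic (mSeq d) ⊆ GSet d
  obtain rfl | ⟨n, rfl⟩ : d = 1 ∨ ∃ n, d = n + 2 := by
    rcases d with _ | _ | n <;> simp_all
  · intro g hg
    obtain rfl : g = 0 := Nat.le_zero.1 hg
    exact zero_mem_GSet_one
  · rw [mSeq_add_two]
    refine List.foldl_induction_mem (P := fun M => Set.Iic M ⊆ GSet (n + 2)) _ ?_
      fun k hk M hM => ?_
    · exact fun g hg => GSet_subset_succ _ (IH (n + 1) (by omega) (by omega) g hg)
    · rw [List.mem_range'_1] at hk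
      split_ifs with hkM
      · exact Iic_max_subset_GSet (by omega) hM (IH _ (by omega) (by omega)) hkM
      · exact hM
end
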